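/- arXiv:2207.01617 — 4 statements merged into one kernel-verified Lean document; each statement's English description precedes it below -/
import Mathlib

section
/- For every function f ∈ H¹(ℝ∖{0}) one has ∫_ℝ |f'(x)|² dx − |f(0⁺) − f(0⁻)|² ≥ −4 ∫_ℝ |f(x)|² dx, with equality attained by f(x) = sgn(x)e^{−2|x|}. -/
/-!
On each half-line `‖f‖²` has derivative `2⟪f, f'⟫` and vanishes at infinity, so its boundary
value at `0` is `-∫ 2⟪f, f'⟫ ≤ ∫ (2‖f‖² + ‖f'‖² / 2)`. Adding the two half-lines and using
`‖L₊ - L₋‖² ≤ 2‖L₊‖² + 2‖L₋‖²` gives `‖L₊ - L₋‖² ≤ ∫ (4‖f‖² + ‖f'‖²)`. For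
`ψ(x) = sgn x · e^{-2|x|}` everything is explicit: `∫ ψ'² = 2` and `∫ ψ² = 1/2`.
-/

open Real Filter MeasureTheory

noncomputable def psi1 : ℝ → ℝ := fun x => Real.sign x * Real.exp (-2 * |x|)

open Set Topology
open scoped InnerProductSpace

section HalfLine

variable {E : Type*} [NormedAddCommGroup E] [NormedSpace ℝ E] [CompleteSpace E]

/- Redefining `g` at `a` as its right limit makes it right-continuous there, and an integrable
function with integrable derivative on a half-line vanishes at infinity. -/
theorem integral_Ioi_of_hasDerivAt_of_tendsto_nhdsGT {g g' : ℝ → E} {a : ℝ} {l : E}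
    (hderiv : ∀ x ∈ Ioi a, HasDerivAt g (g' x) x) (hg : IntegrableOn g (Ioi a))
    (hg' : IntegrableOn g' (Ioi a)) (hl : Tendsto g (𝓝[>] a) (𝓝 l)) :
    ∫ x in Ioi a, g' x = -l := by
  have hcont : ContinuousWithinAt (Function.update g a l) (Ici a) a := by
    rwa [continuousWithinAt_update_same, Ici_sdiff_left]
  have hderiv' : ∀ x ∈ Ioi a, HasDerivAt (Function.update g a l) (g' x) x := fun x hx =>
    (hderiv x hx).congr_of_eventuallyEq <| by
      filter_upwards [Ioi_mem_nhds hx] with y hy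
      exact Function.update_of_ne hy.ne' ..
  have htop : Tendsto (Function.update g a l) atTop (𝓝 0) :=
    (tendsto_zero_of_hasDerivAt_of_integrableOn_Ioi hderiv hg' hg).congr' <| by
      filter_upwards [Ioi_mem_atTop a] with y hy
      exact (Function.update_of_ne hy.ne' ..).symm
  rw [integral_Ioi_of_hasDerivAt_of_tendsto hcont hderiv' hg' htop, Function.update_self,
    zero_sub]

end HalfLine

section InnerProduct

variable {F : Type*} [NormedAddCommGroup F] [InnerProductSpace ℝ F]

theorem abs_two_mul_inner_le (u v : F) : |2 * ⟪u, v⟫_ℝ| ≤ 2 * ‖u‖ ^ 2 + ‖v‖ ^ 2 / 2 := by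
  rw [abs_mul, abs_two]
  nlinarith [abs_real_inner_le_norm u v, sq_nonneg (2 * ‖u‖ - ‖v‖)]

theorem sq_norm_le_integral_Ioi {f f' : ℝ → F} {a : ℝ} {L : F}
    (hderiv : ∀ x ∈ Ioi a, HasDerivAt f (f' x) x)
    (hf : IntegrableOn (fun x => ‖f x‖ ^ 2) (Ioi a))
    (hf' : IntegrableOn (fun x => ‖f' x‖ ^ 2) (Ioi a))
    (hL : Tendsto f (𝓝[>] a) (𝓝 L)) :
    ‖L‖ ^ 2 ≤ ∫ x in Ioi a, (2 * ‖f x‖ ^ 2 + ‖f' x‖ ^ 2 / 2) := by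
  have hsq : ∀ x ∈ Ioi a, HasDerivAt (‖f ·‖ ^ 2) (2 * ⟪f x, f' x⟫_ℝ) x :=
    fun x hx => (hderiv x hx).norm_sq
  have hM : IntegrableOn (fun x => 2 * ‖f x‖ ^ 2 + ‖f' x‖ ^ 2 / 2) (Ioi a) :=
    (hf.const_mul 2).add (hf'.div_const 2)
  have hbound : ∀ x, ‖2 * ⟪f x, f' x⟫_ℝ‖ ≤ 2 * ‖f x‖ ^ 2 + ‖f' x‖ ^ 2 / 2 :=
    fun x => abs_two_mul_inner_le (f x) (f' x)
  have hmeas : AEStronglyMeasurable (fun x => 2 * ⟪f x, f' x⟫_ℝ) (volume.restrict (Ioi a)) :=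
    (stronglyMeasurable_deriv (‖f ·‖ ^ 2)).aestronglyMeasurable.congr <| by
      filter_upwards [self_mem_ae_restrict measurableSet_Ioi] with x hx
      exact (hsq x hx).deriv
  have hint : IntegrableOn (fun x => 2 * ⟪f x, f' x⟫_ℝ) (Ioi a) :=
    hM.mono' hmeas (Eventually.of_forall hbound)
  have hFTC := integral_Ioi_of_hasDerivAt_of_tendsto_nhdsGT hsq hf hint (hL.norm.pow 2)
  calc ‖L‖ ^ 2 = -∫ x in Ioi a, 2 * ⟪f x, f' x⟫_ℝ := by rw [hFTC, neg_neg]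
    _ ≤ ‖∫ x in Ioi a, 2 * ⟪f x, f' x⟫_ℝ‖ := neg_le_abs _
    _ ≤ _ := norm_integral_le_of_norm_le hM (Eventually.of_forall hbound)

theorem sq_norm_le_integral_Iio {f f' : ℝ → F} {a : ℝ} {L : F}
    (hderiv : ∀ x ∈ Iio a, HasDerivAt f (f' x) x)
    (hf : IntegrableOn (fun x => ‖f x‖ ^ 2) (Iio a))
    (hf' : IntegrableOn (fun x => ‖f' x‖ ^ 2) (Iio a))
    (hL : Tendsto f (𝓝[<] a) (𝓝 L)) :
    ‖L‖ ^ 2 ≤ ∫ x in Iio a, (2 * ‖f x‖ ^ 2 + ‖f' x‖ ^ 2 / 2) := by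
  have hderiv' : ∀ x ∈ Ioi (-a), HasDerivAt (fun y => f (-y)) (-f' (-x)) x := fun x hx => by
    simpa [Function.comp_def] using
      (hderiv (-x) (neg_lt.mp (mem_Ioi.mp hx))).scomp x (hasDerivAt_neg x)
  have hf_neg : IntegrableOn (fun x => ‖f (-x)‖ ^ 2) (Ioi (-a)) := by
    simpa using hf.comp_neg
  have hf'_neg : IntegrableOn (fun x => ‖-f' (-x)‖ ^ 2) (Ioi (-a)) := by
    simpa using hf'.comp_neg
  have hL' : Tendsto (fun y => f (-y)) (𝓝[>] (-a)) (𝓝 L) := hL.comp tendsto_neg_nhdsGT_neg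
  calc ‖L‖ ^ 2 ≤ ∫ x in Ioi (-a), (2 * ‖f (-x)‖ ^ 2 + ‖-f' (-x)‖ ^ 2 / 2) :=
        sq_norm_le_integral_Ioi hderiv' hf_neg hf'_neg hL'
    _ = ∫ x in Iio a, (2 * ‖f x‖ ^ 2 + ‖f' x‖ ^ 2 / 2) := by
        simp only [norm_neg]
        rw [integral_comp_neg_Ioi (-a) (fun x => 2 * ‖f x‖ ^ 2 + ‖f' x‖ ^ 2 / 2), neg_neg,
          integral_Iic_eq_integral_Iio]

theorem integral_sq_norm_deriv_sub_sq_norm_jump_ge {f f' : ℝ → F} {Lp Lm : F}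
    (hderiv : ∀ x : ℝ, x ≠ 0 → HasDerivAt f (f' x) x)
    (hf : Integrable (fun x => ‖f x‖ ^ 2)) (hf' : Integrable (fun x => ‖f' x‖ ^ 2))
    (hLp : Tendsto f (𝓝[>] 0) (𝓝 Lp)) (hLm : Tendsto f (𝓝[<] 0) (𝓝 Lm)) :
    (∫ x, ‖f' x‖ ^ 2) - ‖Lp - Lm‖ ^ 2 ≥ -4 * ∫ x, ‖f x‖ ^ 2 := by
  have hp := sq_norm_le_integral_Ioi (fun x hx => hderiv x (ne_of_gt hx)) hf.integrableOn
    hf'.integrableOn hLp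
  have hm := sq_norm_le_integral_Iio (fun x hx => hderiv x (ne_of_lt hx)) hf.integrableOn
    hf'.integrableOn hLm
  have hM : Integrable (fun x => 2 * ‖f x‖ ^ 2 + ‖f' x‖ ^ 2 / 2) :=
    (hf.const_mul 2).add (hf'.div_const 2)
  have hsplit := intervalIntegral.integral_Iio_add_Ici hM.integrableOn hM.integrableOn (b := 0)
  rw [integral_Ici_eq_integral_Ioi, integral_add (hf.const_mul 2) (hf'.div_const 2),
    integral_const_mul, integral_div] at hsplit
  have hpar := parallelogram_law_with_norm ℝ Lp Lm
  nlinarith [norm_nonneg (Lp + Lm)]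

end InnerProduct

theorem hasDerivAt_psi1 {x : ℝ} (hx : x ≠ 0) : HasDerivAt psi1 (-2 * exp (-2 * |x|)) x := by
  rcases hx.lt_or_gt with hx | hx
  · refine (((hasDerivAt_id x).const_mul 2).exp.neg.congr_deriv ?_).congr_of_eventuallyEq ?_
    · rw [abs_of_neg hx, id, neg_mul_neg]; ring
    · filter_upwards [Iio_mem_nhds hx] with y (hy : y < 0)
      simp [psi1, Real.sign_of_neg hy, abs_of_neg hy]
  · refine (((hasDerivAt_id x).const_mul (-2)).exp.congr_deriv ?_).congr_of_eventuallyEq ?_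
    · rw [abs_of_pos hx, id]; ring
    · filter_upwards [Ioi_mem_nhds hx] with y (hy : 0 < y)
      simp [psi1, Real.sign_of_pos hy, abs_of_pos hy]

theorem sq_exp_neg_two_mul (t : ℝ) : exp (-2 * t) ^ 2 = exp (-4 * t) := by
  rw [← exp_nat_mul]
  ring_nf

theorem sq_psi1 {x : ℝ} (hx : x ≠ 0) : psi1 x ^ 2 = exp (-4 * |x|) := by
  have hsign : Real.sign x ^ 2 = 1 := by
    rcases Real.sign_apply_eq_of_ne_zero x hx with h | h <;> simp [h]
  rw [psi1, mul_pow, hsign, one_mul, sq_exp_neg_two_mul]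

theorem integral_exp_neg_four_mul_abs : ∫ x, exp (-4 * |x|) = 1 / 2 := by
  rw [integral_comp_abs (f := fun x => exp (-4 * x)), integral_exp_mul_Ioi (by norm_num)]
  norm_num

theorem integral_sq_deriv_psi1_sub_eq :
    (∫ x, deriv psi1 x ^ 2) - (2 : ℝ) ^ 2 = -4 * ∫ x, psi1 x ^ 2 := by
  have hderiv : (fun x => deriv psi1 x ^ 2) =ᵐ[volume] fun x => 4 * exp (-4 * |x|) := by
    filter_upwards [Measure.ae_ne volume 0] with x hx
    rw [(hasDerivAt_psi1 hx).deriv, mul_pow, sq_exp_neg_two_mul]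
    norm_num
  have hsq : (fun x => psi1 x ^ 2) =ᵐ[volume] fun x => exp (-4 * |x|) := by
    filter_upwards [Measure.ae_ne volume 0] with x hx using sq_psi1 hx
  rw [integral_congr_ae hderiv, integral_congr_ae hsq, integral_const_mul,
    integral_exp_neg_four_mul_abs]
  norm_num

theorem stmt_4 :
    (∀ (f f' : ℝ → ℂ) (Lp Lm : ℂ),
      (∀ x : ℝ, x ≠ 0 → HasDerivAt f (f' x) x) →
      Integrable (fun x => ‖f x‖ ^ 2) →
      Integrable (fun x => ‖f' x‖ ^ 2) →
      Tendsto f (nhdsWithin 0 (Set.Ioi 0)) (nhds Lp) →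
      Tendsto f (nhdsWithin 0 (Set.Iio 0)) (nhds Lm) →
      (∫ x : ℝ, ‖f' x‖ ^ 2) - ‖Lp - Lm‖ ^ 2 ≥ -4 * ∫ x : ℝ, ‖f x‖ ^ 2) ∧
    ((∫ x : ℝ, (deriv psi1 x) ^ 2) - (2 : ℝ) ^ 2 = -4 * ∫ x : ℝ, (psi1 x) ^ 2) :=
  ⟨fun _ _ _ _ => integral_sq_norm_deriv_sub_sq_norm_jump_ge, integral_sq_deriv_psi1_sub_eq⟩
end

section
/- Fix θ ∈ (0, π/2) and let Γ_θ = {(x,y): x ≥ 0, |y| = x tan θ}. Let Ω₊, Ω₋ be the two connected components of ℝ²∖Γ_θ (the sectors of opening 2θ and 2π−2θ). For u ∈ H¹(ℝ²) define Ju = u on Ω₊ and Ju = −u on Ω₋. Then Ju ∈ H¹(ℝ²∖Γ_θ), ‖Ju‖_{L²} = ‖u‖_{L²}, the jump of Ju across Γ_θ equals 2u|_{Γ_θ}, and consequently ∫_{ℝ²∖Γ_θ}|∇(Ju)|² − ∫_{Γ_θ}|[Ju]|² dσ = ∫_{ℝ²}|∇u|² − 4∫_{Γ_θ}|u|² dσ.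 -/
/-! Since `Ω₊` and `Ω₋` are open, `Ju` is locally `u` or `-u` off `Γ_θ`; hence `|Ju| = |u|`
everywhere and `|∇(Ju)| = |∇u|` off the Lebesgue-null set `Γ_θ`. At a point of `Γ_θ` other than
the vertex, the normal segment runs into `Ω₊` on one side and into `Ω₋` on the other, so the jump
is `u + u = 2u`, and `|2u|² = 4|u|²` produces the coupling constant `4`. -/

open MeasureTheory Filter Set Real

/-- The broken line `Γ_θ = {(x,y) : x ≥ 0, |y| = x tan θ}`. -/
def brokenLine (θ : ℝ) : Set (ℝ × ℝ) := {p | 0 ≤ p.1 ∧ |p.2| = p.1 * Real.tan θ}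

/-- The inner sector `Ω₊` of opening `2θ`. -/
def sectorPlus (θ : ℝ) : Set (ℝ × ℝ) := {p | |p.2| < p.1 * Real.tan θ}

/-- The outer sector `Ω₋` of opening `2π − 2θ`. -/
def sectorMinus (θ : ℝ) : Set (ℝ × ℝ) := (sectorPlus θ ∪ brokenLine θ)ᶜ

open Classical in
/-- The sign-flip map `J`: `Ju = u` on `Ω₊` and `Ju = −u` on `Ω₋`. -/
noncomputable def signFlip (θ : ℝ) (u : ℝ × ℝ → ℂ) : ℝ × ℝ → ℂ :=
  fun p => if p ∈ sectorPlus θ then u p else -u p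

/-- A unit normal to `Γ_θ`, pointing into `Ω₊`. -/
noncomputable def brokenNormal (θ : ℝ) (p : ℝ × ℝ) : ℝ × ℝ :=
  if 0 < p.2 then (Real.sin θ, -Real.cos θ) else (Real.sin θ, Real.cos θ)

/-- Integral over `Γ_θ` with respect to arclength, via unit-speed parametrization. -/
noncomputable def lineIntSq (θ : ℝ) (f : ℝ × ℝ → ℂ) : ℝ :=
  ∫ t in Set.Ioi (0 : ℝ),
    (‖f (t * Real.cos θ, t * Real.sin θ)‖ ^ 2 + ‖f (t * Real.cos θ, -(t * Real.sin θ))‖ ^ 2)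

open scoped Topology ENNReal

lemma volume_setOf_snd_eq_mul_fst (c : ℝ) :
    (volume : Measure (ℝ × ℝ)) {p | p.2 = c * p.1} = 0 := by
  let f : (ℝ × ℝ) →ₗ[ℝ] ℝ := LinearMap.snd ℝ ℝ ℝ - c • LinearMap.fst ℝ ℝ ℝ
  have hker : {p : ℝ × ℝ | p.2 = c * p.1} = LinearMap.ker f := by
    ext p
    simp [f, sub_eq_zero]
  have hne : LinearMap.ker f ≠ ⊤ := fun h => by
    simpa [f] using (h ▸ Submodule.mem_top : ((0 : ℝ), (1 : ℝ)) ∈ LinearMap.ker f)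
  rw [hker]
  exact Measure.addHaar_submodule _ _ hne

lemma volume_brokenLine (θ : ℝ) : (volume : Measure (ℝ × ℝ)) (brokenLine θ) = 0 := by
  have hsub : brokenLine θ ⊆ {p | p.2 = tan θ * p.1} ∪ {p | p.2 = -tan θ * p.1} := by
    rintro ⟨x, y⟩ ⟨-, hy⟩
    rcases abs_cases y with ⟨hy', -⟩ | ⟨hy', -⟩
    · left; simp only [mem_ofPred_eq]; linarith
    · right; simp only [mem_ofPred_eq]; linarith
  exact measure_mono_null hsub
    (measure_union_null (volume_setOf_snd_eq_mul_fst _) (volume_setOf_snd_eq_mul_fst _))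

lemma isOpen_sectorPlus (θ : ℝ) : IsOpen (sectorPlus θ) :=
  isOpen_lt continuous_snd.abs (continuous_fst.mul continuous_const)

lemma sectorPlus_union_brokenLine {θ : ℝ} (htan : 0 ≤ tan θ) :
    sectorPlus θ ∪ brokenLine θ = {p | 0 ≤ p.1 ∧ |p.2| ≤ p.1 * tan θ} := by
  ext p
  simp only [sectorPlus, brokenLine, mem_union, mem_ofPred_eq]
  constructor
  · rintro (h | ⟨hx, h⟩)
    · refine ⟨?_, h.le⟩
      by_contra! hx
      linarith [abs_nonneg p.2, mul_nonpos_of_nonpos_of_nonneg hx.le htan]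
    · exact ⟨hx, h.le⟩
  · rintro ⟨hx, h⟩
    rcases h.lt_or_eq with h | h
    exacts [Or.inl h, Or.inr ⟨hx, h⟩]

lemma isOpen_sectorMinus {θ : ℝ} (htan : 0 ≤ tan θ) : IsOpen (sectorMinus θ) := by
  rw [sectorMinus, sectorPlus_union_brokenLine htan, isOpen_compl_iff]
  exact (isClosed_le continuous_const continuous_fst).inter
    (isClosed_le continuous_snd.abs (continuous_fst.mul continuous_const))

section signFlip

variable {θ : ℝ} {u : ℝ × ℝ → ℂ} {p : ℝ × ℝ}

lemma norm_signFlip (θ : ℝ) (u : ℝ × ℝ → ℂ) (p : ℝ × ℝ) : ‖signFlip θ u p‖ = ‖u p‖ := by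
  unfold signFlip
  split_ifs <;> simp

lemma signFlip_eventuallyEq (htan : 0 ≤ tan θ) (hp : p ∉ brokenLine θ) :
    signFlip θ u =ᶠ[𝓝 p] u ∨ signFlip θ u =ᶠ[𝓝 p] -u := by
  by_cases hplus : p ∈ sectorPlus θ
  · left
    filter_upwards [(isOpen_sectorPlus θ).mem_nhds hplus] with q hq using if_pos hq
  · right
    have hminus : p ∈ sectorMinus θ := fun h => h.elim hplus hp
    filter_upwards [(isOpen_sectorMinus htan).mem_nhds hminus] with q hq
    exact if_neg fun h => hq (Or.inl h)

lemma differentiableAt_signFlip (htan : 0 ≤ tan θ) (hu : DifferentiableAt ℝ u p)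
    (hp : p ∉ brokenLine θ) : DifferentiableAt ℝ (signFlip θ u) p := by
  rcases signFlip_eventuallyEq htan hp with h | h
  · exact h.differentiableAt_iff.mpr hu
  · exact h.differentiableAt_iff.mpr hu.neg

lemma norm_fderiv_signFlip (htan : 0 ≤ tan θ) (hp : p ∉ brokenLine θ) :
    ‖fderiv ℝ (signFlip θ u) p‖ = ‖fderiv ℝ u p‖ := by
  rcases signFlip_eventuallyEq htan hp with h | h
  · rw [h.fderiv_eq]
  · rw [h.fderiv_eq, fderiv_neg, norm_neg]

lemma memLp_signFlip {q : ℝ≥0∞} {μ : Measure (ℝ × ℝ)} (hu : MemLp u q μ) :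
    MemLp (signFlip θ u) q μ := by
  classical
  refine hu.congr_norm ?_ (Eventually.of_forall fun p => (norm_signFlip θ u p).symm)
  exact hu.aestronglyMeasurable.restrict.piecewise (isOpen_sectorPlus θ).measurableSet
    hu.aestronglyMeasurable.neg.restrict

end signFlip

section jump

variable {θ : ℝ} {p : ℝ × ℝ}

lemma mem_sectorPlus_add_smul_brokenNormal (hp : p ∈ brokenLine θ) (t : ℝ) :
    p + t • brokenNormal θ p ∈ sectorPlus θ ↔
      |p.1 * tan θ - t * cos θ| < (p.1 + t * sin θ) * tan θ := by
  obtain ⟨x, y⟩ := p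
  obtain ⟨-, hy⟩ := hp
  simp only [sectorPlus, brokenNormal, mem_ofPred_eq]
  split_ifs with hpos
  · rw [abs_of_pos hpos] at hy
    simp [hy, sub_eq_add_neg]
  · rw [abs_of_nonpos (not_lt.mp hpos)] at hy
    rw [← abs_neg]
    simp [← hy]
    ring_nf

lemma eventually_mem_sectorPlus_brokenNormal (hθ : θ ∈ Ioo 0 (π / 2))
    (hp : p ∈ brokenLine θ) (hp0 : p ≠ 0) :
    ∀ᶠ t in 𝓝[>] (0 : ℝ),
      p + t • brokenNormal θ p ∈ sectorPlus θ ∧ p - t • brokenNormal θ p ∉ sectorPlus θ := by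
  have htan : 0 < tan θ := tan_pos_of_pos_of_lt_pi_div_two hθ.1 hθ.2
  have hsin : 0 < sin θ := sin_pos_of_pos_of_lt_pi hθ.1 (by linarith [hθ.2, pi_pos])
  have hcos : 0 < cos θ := cos_pos_of_mem_Ioo ⟨by linarith [hθ.1, pi_pos], hθ.2⟩
  have hx : 0 < p.1 := by
    refine hp.1.lt_of_ne fun hx => hp0 (Prod.ext hx.symm ?_)
    simpa [← hx] using hp.2
  filter_upwards [Ioo_mem_nhdsGT (by positivity : (0 : ℝ) < 2 * p.1 * tan θ)] with t ht
  rw [sub_eq_add_neg, ← neg_smul, mem_sectorPlus_add_smul_brokenNormal hp,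
    mem_sectorPlus_add_smul_brokenNormal hp, abs_lt, not_lt, abs_of_pos (by nlinarith [ht.1])]
  refine ⟨⟨?_, ?_⟩, ?_⟩ <;> nlinarith [ht.1, ht.2, cos_le_one θ, mul_pos ht.1 hsin]

lemma tendsto_signFlip_jump {u : ℝ × ℝ → ℂ} (hθ : θ ∈ Ioo 0 (π / 2)) (hu : ContinuousAt u p)
    (hp : p ∈ brokenLine θ) (hp0 : p ≠ 0) :
    Tendsto (fun t : ℝ =>
        signFlip θ u (p + t • brokenNormal θ p) - signFlip θ u (p - t • brokenNormal θ p))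
      (𝓝[>] 0) (𝓝 (2 * u p)) := by
  have hline : ∀ s : ℝ, Tendsto (fun t : ℝ => p + (s * t) • brokenNormal θ p) (𝓝 0) (𝓝 p) :=
    fun s => (Continuous.tendsto' (by fun_prop) 0 p (by simp))
  have hsum : Tendsto (fun t : ℝ => u (p + t • brokenNormal θ p) + u (p - t • brokenNormal θ p))
      (𝓝[>] 0) (𝓝 (2 * u p)) := by
    rw [two_mul]
    refine ((hu.tendsto.comp (hline 1)).add (hu.tendsto.comp (hline (-1)))).mono_left
      nhdsWithin_le_nhds |>.congr fun t => ?_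
    simp [sub_eq_add_neg]
  refine hsum.congr' ?_
  filter_upwards [eventually_mem_sectorPlus_brokenNormal hθ hp hp0] with t ⟨hplus, hminus⟩
  simp only [signFlip, if_pos hplus, if_neg hminus, sub_neg_eq_add]

end jump

lemma lineIntSq_const_mul (θ : ℝ) (c : ℂ) (f : ℝ × ℝ → ℂ) :
    lineIntSq θ (fun p => c * f p) = ‖c‖ ^ 2 * lineIntSq θ f := by
  simp only [lineIntSq, norm_mul, mul_pow, ← mul_add]
  exact integral_const_mul _ _

lemma setIntegral_compl_brokenLine_norm_fderiv_signFlip_sq {θ : ℝ} (htan : 0 ≤ tan θ)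
    (u : ℝ × ℝ → ℂ) :
    ∫ p in (brokenLine θ)ᶜ, ‖fderiv ℝ (signFlip θ u) p‖ ^ 2 = ∫ p, ‖fderiv ℝ u p‖ ^ 2 := by
  have hae : ∀ᵐ p ∂(volume : Measure (ℝ × ℝ)), p ∈ (brokenLine θ)ᶜ :=
    compl_mem_ae_iff.mpr (volume_brokenLine θ)
  rw [Measure.restrict_eq_self_of_ae_mem hae]
  exact integral_congr_ae (hae.mono fun p hp => congrArg (· ^ 2) (norm_fderiv_signFlip htan hp))

theorem stmt_11_general (θ : ℝ) (hθ : θ ∈ Set.Ioo 0 (Real.pi / 2))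
    (u : ℝ × ℝ → ℂ) (hu : ContDiff ℝ 1 u)
    -- u ∈ H¹(ℝ²)
    (huL2 : MemLp u 2 (volume : Measure (ℝ × ℝ))) :
    -- Ju ∈ H¹(ℝ²∖Γ_θ) with the same L²-norm
    (∀ p ∉ brokenLine θ, HasFDerivAt (signFlip θ u) (fderiv ℝ (signFlip θ u) p) p) ∧
    MemLp (signFlip θ u) 2 (volume : Measure (ℝ × ℝ)) ∧
    (∫ p : ℝ × ℝ, ‖signFlip θ u p‖ ^ 2) = (∫ p : ℝ × ℝ, ‖u p‖ ^ 2) ∧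
    -- the jump of Ju across Γ_θ equals 2u on Γ_θ
    (∀ p ∈ brokenLine θ, p ≠ 0 →
      Tendsto (fun t : ℝ =>
          signFlip θ u (p + t • brokenNormal θ p) - signFlip θ u (p - t • brokenNormal θ p))
        (nhdsWithin 0 (Set.Ioi 0)) (nhds (2 * u p))) ∧
    -- the δ'-form of Ju equals the δ-form of u with coupling 4
    (∫ p in (brokenLine θ)ᶜ, ‖fderiv ℝ (signFlip θ u) p‖ ^ 2)
        - lineIntSq θ (fun p => 2 * u p)
      = (∫ p : ℝ × ℝ, ‖fderiv ℝ u p‖ ^ 2) - 4 * lineIntSq θ u := by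
  have htan : 0 ≤ tan θ := (tan_pos_of_pos_of_lt_pi_div_two hθ.1 hθ.2).le
  refine ⟨fun p hp => ?_, memLp_signFlip huL2, by simp only [norm_signFlip],
    fun p hp hp0 => tendsto_signFlip_jump hθ hu.continuous.continuousAt hp hp0, ?_⟩
  · exact (differentiableAt_signFlip htan (hu.differentiable one_ne_zero p) hp).hasFDerivAt
  · rw [setIntegral_compl_brokenLine_norm_fderiv_signFlip_sq htan, lineIntSq_const_mul]
    norm_num

theorem stmt_11 (θ : ℝ) (hθ : θ ∈ Set.Ioo 0 (Real.pi / 2))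
    (u : ℝ × ℝ → ℂ) (hu : ContDiff ℝ 1 u)
    -- u ∈ H¹(ℝ²)
    (huL2 : MemLp u 2 (volume : Measure (ℝ × ℝ)))
    (hgradL2 : MemLp (fun p => ‖fderiv ℝ u p‖) 2 (volume : Measure (ℝ × ℝ))) :
    -- Ju ∈ H¹(ℝ²∖Γ_θ) with the same L²-norm
    (∀ p ∉ brokenLine θ, HasFDerivAt (signFlip θ u) (fderiv ℝ (signFlip θ u) p) p) ∧
    MemLp (signFlip θ u) 2 (volume : Measure (ℝ × ℝ)) ∧
    (∫ p : ℝ × ℝ, ‖signFlip θ u p‖ ^ 2) = (∫ p : ℝ × ℝ, ‖u p‖ ^ 2) ∧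
    -- the jump of Ju across Γ_θ equals 2u on Γ_θ
    (∀ p ∈ brokenLine θ, p ≠ 0 →
      Tendsto (fun t : ℝ =>
          signFlip θ u (p + t • brokenNormal θ p) - signFlip θ u (p - t • brokenNormal θ p))
        (nhdsWithin 0 (Set.Ioi 0)) (nhds (2 * u p))) ∧
    -- the δ'-form of Ju equals the δ-form of u with coupling 4
    (∫ p in (brokenLine θ)ᶜ, ‖fderiv ℝ (signFlip θ u) p‖ ^ 2)
        - lineIntSq θ (fun p => 2 * u p)
      = (∫ p : ℝ × ℝ, ‖fderiv ℝ u p‖ ^ 2) - 4 * lineIntSq θ u :=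
  stmt_11_general θ hθ u hu huL2
end

section
/- Let v ∈ H¹(Ω) where Ω = {(x,y): x < y tan θ} for θ ∈ (0,π/2), with v = 0 on ∂Ω, and let ṽ be its extension by zero to ℝ². Then for almost every y ∈ ℝ the function x ↦ ṽ(x,y) belongs to H¹(ℝ∖{0}), and ∫_{Ω∖Oy⁺}|∇v|² dx dy − ∫₀^∞ |v(0⁺,y) − v(0⁻,y)|² dy ≥ −4 ∫_Ω |v|² dx dy, where Oy⁺ is the positive y-axis. -/
/-!
On almost every horizontal line, `f = v(·, y)` is an `H¹` function on `ℝ ∖ {0}`. The derivative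
`2⟪f, f'⟫` of `‖f‖²` is dominated by `2‖f‖² + ‖f'‖²/2`, and `‖f‖²` vanishes at infinity, so
integrating it over `(0, ∞)` gives `‖f(0⁺)‖² ≤ ∫_{x > 0} (2‖f‖² + ‖f'‖²/2)`; with the mirror bound
for `f(0⁻)` and `‖p - m‖² ≤ 2‖p‖² + 2‖m‖²` this is `‖f(0⁺) - f(0⁻)‖² ≤ ∫ ‖f'‖² + 4 ∫ ‖f‖²`.
Integrate over `y > 0` and use Fubini; `∂ₓv` vanishes off `Ω` away from the axis, because `v`
vanishes on each ray `[y tan θ, ∞)`.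
-/

open MeasureTheory Filter Set Real Topology

lemma HasDerivAt.eq_zero_of_forall_Ici_eq_zero {F : Type*} [NormedAddCommGroup F]
    [NormedSpace ℝ F] {f : ℝ → F} {f' : F} {a : ℝ} (hf : HasDerivAt f f' a)
    (h0 : ∀ x ∈ Ici a, f x = 0) : f' = 0 :=
  (uniqueDiffOn_Ici a a self_mem_Ici).eq_deriv _ hf.hasDerivWithinAt
    ((hasDerivWithinAt_const a _ 0).congr h0 (h0 a self_mem_Ici))

section

variable {E : Type*} [NormedAddCommGroup E] [InnerProductSpace ℝ E]

lemma abs_two_mul_inner_le_s13 (a b : E) : |2 * inner ℝ a b| ≤ 2 * ‖a‖ ^ 2 + ‖b‖ ^ 2 / 2 := by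
  have := abs_real_inner_le_norm a b
  rw [abs_mul, abs_two]
  nlinarith [sq_nonneg (2 * ‖a‖ - ‖b‖)]

theorem sq_norm_le_integral_Ioi_of_tendsto {f g : ℝ → E} {a : ℝ} {p : E}
    (hd : ∀ x ∈ Ioi a, HasDerivAt f (g x) x)
    (hf : IntegrableOn (fun x => ‖f x‖ ^ 2) (Ioi a))
    (hg : IntegrableOn (fun x => ‖g x‖ ^ 2) (Ioi a))
    (hp : Tendsto f (𝓝[>] a) (𝓝 p)) :
    ‖p‖ ^ 2 ≤ ∫ x in Ioi a, (2 * ‖f x‖ ^ 2 + ‖g x‖ ^ 2 / 2) := by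
  have hB : IntegrableOn (fun x => 2 * ‖f x‖ ^ 2 + ‖g x‖ ^ 2 / 2) (Ioi a) :=
    (hf.const_mul 2).add (hg.div_const 2)
  have hG : ∀ x ∈ Ioi a, HasDerivAt (‖f ·‖ ^ 2) (2 * inner ℝ (f x) (g x)) x :=
    fun x hx => (hd x hx).norm_sq
  -- measurable because it agrees with `deriv (‖f ·‖ ^ 2)` on `Ioi a`, whatever `g` is
  have hH : IntegrableOn (fun x => 2 * inner ℝ (f x) (g x)) (Ioi a) :=
    hB.mono' ((measurable_deriv _).aestronglyMeasurable.congr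
      (ae_restrict_of_forall_mem measurableSet_Ioi fun x hx => (hG x hx).deriv))
      (ae_of_all _ fun x => abs_two_mul_inner_le_s13 (f x) (g x))
  have hG0 : Tendsto (‖f ·‖ ^ 2) atTop (𝓝 0) :=
    tendsto_zero_of_hasDerivAt_of_integrableOn_Ioi hG hH hf
  have hbound : ∀ b ∈ Ioi a, ‖f b‖ ^ 2 ≤ ∫ x in Ioi a, (2 * ‖f x‖ ^ 2 + ‖g x‖ ^ 2 / 2) := by
    intro b hb
    have hba : Ioi b ⊆ Ioi a := Ioi_subset_Ioi hb.le
    have hFTC :=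
      integral_Ioi_of_hasDerivAt_of_tendsto (hG b hb).continuousAt.continuousWithinAt
        (fun x hx => hG x (hba hx)) (hH.mono_set hba) hG0
    calc ‖f b‖ ^ 2 = ∫ x in Ioi b, -(2 * inner ℝ (f x) (g x)) := by
          rw [integral_neg, hFTC]; ring
      _ ≤ ∫ x in Ioi b, (2 * ‖f x‖ ^ 2 + ‖g x‖ ^ 2 / 2) :=
        integral_mono (hH.mono_set hba).neg (hB.mono_set hba)
          fun x => (neg_le_abs _).trans (abs_two_mul_inner_le_s13 (f x) (g x))
      _ ≤ ∫ x in Ioi a, (2 * ‖f x‖ ^ 2 + ‖g x‖ ^ 2 / 2) :=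
        setIntegral_mono_set hB (ae_of_all _ fun x => by positivity) hba.eventuallyLE
  exact le_of_tendsto (hp.norm.pow 2) (eventually_mem_nhdsWithin.mono hbound)

theorem sq_norm_sub_le_integral_of_hasDerivAt {f g : ℝ → E} {p m : E}
    (hd : ∀ x ≠ 0, HasDerivAt f (g x) x)
    (hf : Integrable (fun x => ‖f x‖ ^ 2)) (hg : Integrable (fun x => ‖g x‖ ^ 2))
    (hp : Tendsto f (𝓝[>] 0) (𝓝 p)) (hm : Tendsto f (𝓝[<] 0) (𝓝 m)) :
    ‖p - m‖ ^ 2 ≤ ∫ x, (‖g x‖ ^ 2 + 4 * ‖f x‖ ^ 2) := by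
  have hB : Integrable (fun x => 2 * ‖f x‖ ^ 2 + ‖g x‖ ^ 2 / 2) :=
    (hf.const_mul 2).add (hg.div_const 2)
  have hright : ‖p‖ ^ 2 ≤ ∫ x in Ioi 0, (2 * ‖f x‖ ^ 2 + ‖g x‖ ^ 2 / 2) :=
    sq_norm_le_integral_Ioi_of_tendsto (fun x hx => hd x hx.ne') hf.integrableOn hg.integrableOn hp
  have hleft : ‖m‖ ^ 2 ≤ ∫ x in Iic 0, (2 * ‖f x‖ ^ 2 + ‖g x‖ ^ 2 / 2) := by
    have hd' : ∀ x ∈ Ioi (0 : ℝ), HasDerivAt (fun x => f (-x)) (-g (-x)) x := fun x hx => by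
      simpa [Function.comp_def] using (hd (-x) (neg_ne_zero.2 hx.ne')).scomp x (hasDerivAt_neg x)
    have h := sq_norm_le_integral_Ioi_of_tendsto hd' hf.comp_neg.integrableOn
      (by simpa using hg.comp_neg.integrableOn)
      (by simpa [Function.comp_def] using hm.comp tendsto_neg_nhdsGT_neg)
    simp only [norm_neg] at h
    rwa [integral_comp_neg_Ioi 0 (fun x => 2 * ‖f x‖ ^ 2 + ‖g x‖ ^ 2 / 2), neg_zero] at h
  calc ‖p - m‖ ^ 2 ≤ 2 * ‖p‖ ^ 2 + 2 * ‖m‖ ^ 2 := by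
        nlinarith [norm_sub_le p m, norm_nonneg (p - m), sq_nonneg (‖p‖ - ‖m‖)]
    _ ≤ 2 * ((∫ x in Iic 0, (2 * ‖f x‖ ^ 2 + ‖g x‖ ^ 2 / 2)) +
          ∫ x in Ioi 0, (2 * ‖f x‖ ^ 2 + ‖g x‖ ^ 2 / 2)) := by linarith
    _ = ∫ x, (‖g x‖ ^ 2 + 4 * ‖f x‖ ^ 2) := by
      rw [intervalIntegral.integral_Iic_add_Ioi hB.integrableOn hB.integrableOn,
        ← integral_const_mul]
      congr 1 with x
      ring

theorem setIntegral_Ioi_sq_norm_jump_le {v vx : ℝ × ℝ → E} {Vp Vm : ℝ → E}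
    (hx : ∀ y > 0, ∀ x ≠ 0, HasDerivAt (fun s => v (s, y)) (vx (x, y)) x)
    (htp : ∀ y > 0, Tendsto (fun x => v (x, y)) (𝓝[>] 0) (𝓝 (Vp y)))
    (htm : ∀ y > 0, Tendsto (fun x => v (x, y)) (𝓝[<] 0) (𝓝 (Vm y)))
    (hv : Integrable (fun p => ‖v p‖ ^ 2)) (hvx : Integrable (fun p => ‖vx p‖ ^ 2)) :
    ∫ y in Ioi 0, ‖Vp y - Vm y‖ ^ 2 ≤ ∫ p, (‖vx p‖ ^ 2 + 4 * ‖v p‖ ^ 2) := by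
  have hF : Integrable (fun p : ℝ × ℝ => ‖vx p‖ ^ 2 + 4 * ‖v p‖ ^ 2) (volume.prod volume) :=
    hvx.add (hv.const_mul 4)
  have hjump : ∀ᵐ y ∂volume.restrict (Ioi 0),
      ‖Vp y - Vm y‖ ^ 2 ≤ ∫ x, (‖vx (x, y)‖ ^ 2 + 4 * ‖v (x, y)‖ ^ 2) := by
    filter_upwards [ae_restrict_of_ae (hv.prod_left_ae.and hvx.prod_left_ae),
      ae_restrict_mem measurableSet_Ioi] with y ⟨hvy, hvxy⟩ hy
    exact sq_norm_sub_le_integral_of_hasDerivAt (hx y hy) hvy hvxy (htp y hy) (htm y hy)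
  calc ∫ y in Ioi 0, ‖Vp y - Vm y‖ ^ 2
      ≤ ∫ y in Ioi 0, ∫ x, (‖vx (x, y)‖ ^ 2 + 4 * ‖v (x, y)‖ ^ 2) :=
        integral_mono_of_nonneg (ae_of_all _ fun _ => by positivity)
          hF.integral_prod_right.integrableOn hjump
    _ ≤ ∫ y, ∫ x, (‖vx (x, y)‖ ^ 2 + 4 * ‖v (x, y)‖ ^ 2) :=
        setIntegral_le_integral hF.integral_prod_right
          (ae_of_all _ fun _ => integral_nonneg fun _ => by positivity)
    _ = ∫ p, (‖vx p‖ ^ 2 + 4 * ‖v p‖ ^ 2) := (integral_prod_symm _ hF).symm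

end

theorem stmt_13_general (θ : ℝ)
    (v vx vy : ℝ × ℝ → ℂ) (Vp Vm : ℝ → ℂ)
    (hmvx : Measurable vx)
    -- ṽ is the extension of v by zero outside Ω = {(x,y) : x < y tan θ}
    (hzero : ∀ p : ℝ × ℝ, p ∉ {q : ℝ × ℝ | q.1 < q.2 * Real.tan θ} → v p = 0)
    -- fiberwise x-derivative off the y-axis
    (hx : ∀ y : ℝ, ∀ x : ℝ, x ≠ 0 → HasDerivAt (fun s => v (s, y)) (vx (x, y)) x)
    -- one-sided traces on the positive y-axis
    (htp : ∀ y : ℝ, 0 < y →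
      Tendsto (fun x => v (x, y)) (nhdsWithin 0 (Set.Ioi 0)) (nhds (Vp y)))
    (htm : ∀ y : ℝ, 0 < y →
      Tendsto (fun x => v (x, y)) (nhdsWithin 0 (Set.Iio 0)) (nhds (Vm y)))
    -- v ∈ H¹
    (hint : Integrable (fun p : ℝ × ℝ => ‖vx p‖ ^ 2 + ‖vy p‖ ^ 2)
      (volume.restrict {q : ℝ × ℝ | q.1 < q.2 * Real.tan θ}))
    (hint2 : Integrable (fun p : ℝ × ℝ => ‖v p‖ ^ 2)
      (volume.restrict {q : ℝ × ℝ | q.1 < q.2 * Real.tan θ})) :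
    -- a.e. fiber lies in H¹(ℝ∖{0})
    (∀ᵐ y : ℝ, Integrable (fun x => ‖v (x, y)‖ ^ 2) ∧
      Integrable (fun x => ‖vx (x, y)‖ ^ 2)) ∧
    -- the fiberwise δ' lower bound
    (∫ p in {q : ℝ × ℝ | q.1 < q.2 * Real.tan θ}, (‖vx p‖ ^ 2 + ‖vy p‖ ^ 2))
        - (∫ y in Set.Ioi (0 : ℝ), ‖Vp y - Vm y‖ ^ 2)
      ≥ -4 * ∫ p in {q : ℝ × ℝ | q.1 < q.2 * Real.tan θ}, ‖v p‖ ^ 2 := by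
  set Ω := {q : ℝ × ℝ | q.1 < q.2 * Real.tan θ}
  have hvx_off : ∀ᵐ p : ℝ × ℝ, p ∉ Ω → ‖vx p‖ ^ 2 = 0 := by
    filter_upwards [Measure.quasiMeasurePreserving_fst.ae (Measure.ae_ne volume 0)] with p hp hpΩ
    have hvx0 := (hx p.2 p.1 hp).eq_zero_of_forall_Ici_eq_zero fun s hs =>
      hzero _ fun hsΩ => hpΩ (show p.1 < p.2 * Real.tan θ from hs.trans_lt hsΩ)
    simp [hvx0]
  have hvxΩ : IntegrableOn (fun p => ‖vx p‖ ^ 2) Ω :=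
    hint.mono' (hmvx.norm.pow_const 2).aestronglyMeasurable
      (ae_of_all _ fun p => by simp [sq_nonneg ‖vy p‖])
  have hv : Integrable (fun p => ‖v p‖ ^ 2) :=
    IntegrableOn.integrable_of_forall_notMem_eq_zero hint2 fun p hp => by simp [hzero p hp]
  have hvx : Integrable (fun p => ‖vx p‖ ^ 2) :=
    hvxΩ.integrable_of_ae_notMem_eq_zero hvx_off
  refine ⟨hv.prod_left_ae.and hvx.prod_left_ae, ?_⟩
  have hjump := setIntegral_Ioi_sq_norm_jump_le (fun y _ => hx y) htp htm hv hvx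
  have hsplit : ∫ p, (‖vx p‖ ^ 2 + 4 * ‖v p‖ ^ 2) =
      (∫ p in Ω, ‖vx p‖ ^ 2) + 4 * ∫ p in Ω, ‖v p‖ ^ 2 := by
    rw [integral_add hvx (hv.const_mul 4), integral_const_mul,
      setIntegral_eq_integral_of_ae_compl_eq_zero hvx_off,
      setIntegral_eq_integral_of_forall_compl_eq_zero fun p hp => by simp [hzero p hp]]
  have hvy : ∫ p in Ω, ‖vx p‖ ^ 2 ≤ ∫ p in Ω, (‖vx p‖ ^ 2 + ‖vy p‖ ^ 2) :=
    integral_mono hvxΩ hint fun p => by simp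
  linarith

theorem stmt_13 (θ : ℝ) (hθ : θ ∈ Set.Ioo 0 (Real.pi / 2))
    (v vx vy : ℝ × ℝ → ℂ) (Vp Vm : ℝ → ℂ)
    (hmv : Measurable v) (hmvx : Measurable vx) (hmvy : Measurable vy)
    -- ṽ is the extension of v by zero outside Ω = {(x,y) : x < y tan θ}
    (hzero : ∀ p : ℝ × ℝ, p ∉ {q : ℝ × ℝ | q.1 < q.2 * Real.tan θ} → v p = 0)
    -- fiberwise x-derivative off the y-axis
    (hx : ∀ y : ℝ, ∀ x : ℝ, x ≠ 0 → HasDerivAt (fun s => v (s, y)) (vx (x, y)) x)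
    -- one-sided traces on the positive y-axis
    (htp : ∀ y : ℝ, 0 < y →
      Tendsto (fun x => v (x, y)) (nhdsWithin 0 (Set.Ioi 0)) (nhds (Vp y)))
    (htm : ∀ y : ℝ, 0 < y →
      Tendsto (fun x => v (x, y)) (nhdsWithin 0 (Set.Iio 0)) (nhds (Vm y)))
    -- v ∈ H¹
    (hint : Integrable (fun p : ℝ × ℝ => ‖vx p‖ ^ 2 + ‖vy p‖ ^ 2)
      (volume.restrict {q : ℝ × ℝ | q.1 < q.2 * Real.tan θ}))
    (hint2 : Integrable (fun p : ℝ × ℝ => ‖v p‖ ^ 2)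
      (volume.restrict {q : ℝ × ℝ | q.1 < q.2 * Real.tan θ})) :
    -- a.e. fiber lies in H¹(ℝ∖{0})
    (∀ᵐ y : ℝ, Integrable (fun x => ‖v (x, y)‖ ^ 2) ∧
      Integrable (fun x => ‖vx (x, y)‖ ^ 2)) ∧
    -- the fiberwise δ' lower bound
    (∫ p in {q : ℝ × ℝ | q.1 < q.2 * Real.tan θ}, (‖vx p‖ ^ 2 + ‖vy p‖ ^ 2))
        - (∫ y in Set.Ioi (0 : ℝ), ‖Vp y - Vm y‖ ^ 2)
      ≥ -4 * ∫ p in {q : ℝ × ℝ | q.1 < q.2 * Real.tan θ}, ‖v p‖ ^ 2 :=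
  stmt_13_general θ v vx vy Vp Vm hmvx hzero hx htp htm hint hint2
end

section
/- Let Γ ⊂ ℝ² be the x-axis. For u ∈ H¹(ℝ×(ℝ∖{0})) one has ∫_{ℝ×(ℝ∖{0})}|∇u|² dx dy − ∫_ℝ |u(x,0⁺) − u(x,0⁻)|² dx ≥ −4‖u‖²_{L²(ℝ²)}. -/
/-!
On a vertical line, let `v` be the restriction of `u` and `a`, `b` its traces at `0⁺`, `0⁻`.
Since `‖v‖²` and its derivative `2⟪v, v'⟫` are integrable on each half-line, `‖v‖²` vanishes
at `±∞`, so `‖a‖² = -∫_{y>0} 2⟪v, v'⟫` and `‖b‖² = ∫_{y<0} 2⟪v, v'⟫`. Hence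
`‖a - b‖² ≤ 2(‖a‖² + ‖b‖²) ≤ ∫ 4‖v‖‖v'‖ ≤ ∫ ‖v'‖² + 4‖v‖²`, the one-dimensional δ'-bound.
Integrating over `x` (Fubini) and adding the nonnegative `∂ₓ`-term gives the claim.
-/

open MeasureTheory Filter Set Topology

section ImproperFTC

variable {E : Type*} [NormedAddCommGroup E] [NormedSpace ℝ E] [CompleteSpace E]
  {f f' : ℝ → E} {a : ℝ} {m : E}

theorem integral_Ioi_eq_neg_of_hasDerivAt_of_integrableOn
    (hderiv : ∀ x ∈ Ioi a, HasDerivAt f (f' x) x) (hlim : Tendsto f (𝓝[>] a) (𝓝 m))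
    (hf : IntegrableOn f (Ioi a)) (hf' : IntegrableOn f' (Ioi a)) :
    ∫ x in Ioi a, f' x = -m := by
  have hupdate : ∀ x ∈ Ioi a, HasDerivAt (Function.update f a m) (f' x) x := fun x hx =>
    (hderiv x hx).congr_of_eventuallyEq <| by
      filter_upwards [eventually_ne_nhds (ne_of_gt hx)] with y hy
      exact Function.update_of_ne hy m f
  have hzero : Tendsto (Function.update f a m) atTop (𝓝 0) :=
    (tendsto_zero_of_hasDerivAt_of_integrableOn_Ioi hderiv hf' hf).congr' <| by
      filter_upwards [eventually_ne_atTop a] with x hx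
      exact (Function.update_of_ne hx m f).symm
  rw [← Ici_sdiff_left] at hlim
  simpa using integral_Ioi_of_hasDerivAt_of_tendsto
    (continuousWithinAt_update_same.mpr hlim) hupdate hf' hzero

theorem integral_Iio_eq_of_hasDerivAt_of_integrableOn
    (hderiv : ∀ x ∈ Iio a, HasDerivAt f (f' x) x) (hlim : Tendsto f (𝓝[<] a) (𝓝 m))
    (hf : IntegrableOn f (Iio a)) (hf' : IntegrableOn f' (Iio a)) :
    ∫ x in Iio a, f' x = m := by
  have hupdate : ∀ x ∈ Iio a, HasDerivAt (Function.update f a m) (f' x) x := fun x hx =>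
    (hderiv x hx).congr_of_eventuallyEq <| by
      filter_upwards [eventually_ne_nhds (ne_of_lt hx)] with y hy
      exact Function.update_of_ne hy m f
  have hsub : Iic (a - 1) ⊆ Iio a := Iic_subset_Iio.mpr (by linarith)
  have hzero : Tendsto (Function.update f a m) atBot (𝓝 0) :=
    (tendsto_zero_of_hasDerivAt_of_integrableOn_Iic (fun x hx => hderiv x (hsub hx))
      (hf'.mono_set hsub) (hf.mono_set hsub)).congr' <| by
      filter_upwards [eventually_ne_atBot a] with x hx
      exact (Function.update_of_ne hx m f).symm
  rw [← Iic_sdiff_right] at hlim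
  rw [← integral_Iic_eq_integral_Iio]
  simpa using integral_Iic_of_hasDerivAt_of_tendsto
    (continuousWithinAt_update_same.mpr hlim) hupdate
    ((integrableOn_Iic_iff_integrableOn_Iio).2 hf') hzero

end ImproperFTC

section Trace

variable {E : Type*} [NormedAddCommGroup E] {v w : ℝ → E} {μ : Measure ℝ}

theorem integrable_norm_mul_norm_of_memLp_two (hv : MemLp v 2 μ) (hw : MemLp w 2 μ) :
    Integrable (fun y => ‖v y‖ * ‖w y‖) μ :=
  hv.norm.integrable_mul hw.norm

variable [InnerProductSpace ℝ E]

theorem integrable_inner_of_memLp_two (hv : MemLp v 2 μ) (hw : MemLp w 2 μ) :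
    Integrable (fun y => inner ℝ (v y) (w y)) μ :=
  (integrable_norm_mul_norm_of_memLp_two hv hw).mono' (hv.1.inner hw.1)
    (ae_of_all _ fun _ => norm_inner_le_norm _ _)

theorem norm_sq_add_norm_sq_le_integral_of_hasDerivAt {a b : E}
    (hd : ∀ y ≠ 0, HasDerivAt v (w y) y)
    (ha : Tendsto v (𝓝[>] 0) (𝓝 a)) (hb : Tendsto v (𝓝[<] 0) (𝓝 b))
    (hv : MemLp v 2) (hw : MemLp w 2) :
    ‖a‖ ^ 2 + ‖b‖ ^ 2 ≤ ∫ y, 2 * (‖v y‖ * ‖w y‖) := by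
  set g := fun y => 2 * inner ℝ (v y) (w y)
  set h := fun y => 2 * (‖v y‖ * ‖w y‖)
  have hg : Integrable g := (integrable_inner_of_memLp_two hv hw).const_mul 2
  have hh : Integrable h := (integrable_norm_mul_norm_of_memLp_two hv hw).const_mul 2
  have hsq : Integrable (fun y => ‖v y‖ ^ 2) := hv.integrable_norm_pow two_ne_zero
  have hg_le : ∀ y, |g y| ≤ h y := fun y => by
    simpa [g, h, abs_mul] using abs_real_inner_le_norm (v y) (w y)
  have hpos : ∫ y in Ioi 0, g y = -‖a‖ ^ 2 :=
    integral_Ioi_eq_neg_of_hasDerivAt_of_integrableOn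
      (fun y hy => (hd y (ne_of_gt hy)).norm_sq) (ha.norm.pow 2) hsq.integrableOn hg.integrableOn
  have hneg : ∫ y in Iio 0, g y = ‖b‖ ^ 2 :=
    integral_Iio_eq_of_hasDerivAt_of_integrableOn
      (fun y hy => (hd y (ne_of_lt hy)).norm_sq) (hb.norm.pow 2) hsq.integrableOn hg.integrableOn
  have hpos_le : -∫ y in Ioi 0, g y ≤ ∫ y in Ioi 0, h y := by
    rw [← integral_neg]
    exact setIntegral_mono hg.integrableOn.neg hh.integrableOn
      fun y => (neg_le_abs _).trans (hg_le y)
  have hneg_le : ∫ y in Iio 0, g y ≤ ∫ y in Iio 0, h y :=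
    setIntegral_mono hg.integrableOn hh.integrableOn fun y => (le_abs_self _).trans (hg_le y)
  have hsplit := intervalIntegral.integral_Iic_add_Ioi (b := 0) hh.integrableOn hh.integrableOn
  rw [integral_Iic_eq_integral_Iio] at hsplit
  linarith

theorem norm_sub_sq_le_integral_of_hasDerivAt {a b : E}
    (hd : ∀ y ≠ 0, HasDerivAt v (w y) y)
    (ha : Tendsto v (𝓝[>] 0) (𝓝 a)) (hb : Tendsto v (𝓝[<] 0) (𝓝 b))
    (hv : MemLp v 2) (hw : MemLp w 2) :
    ‖a - b‖ ^ 2 ≤ ∫ y, (‖w y‖ ^ 2 + 4 * ‖v y‖ ^ 2) := by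
  have hparallelogram : ‖a - b‖ ^ 2 ≤ 2 * (‖a‖ ^ 2 + ‖b‖ ^ 2) := by
    nlinarith [norm_sub_le a b, norm_nonneg (a - b), sq_nonneg (‖a‖ - ‖b‖)]
  have hamgm : ∫ y, 2 * (2 * (‖v y‖ * ‖w y‖)) ≤ ∫ y, (‖w y‖ ^ 2 + 4 * ‖v y‖ ^ 2) :=
    integral_mono (((integrable_norm_mul_norm_of_memLp_two hv hw).const_mul 2).const_mul 2)
      ((hw.integrable_norm_pow two_ne_zero).add ((hv.integrable_norm_pow two_ne_zero).const_mul 4))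
      fun y => by nlinarith [sq_nonneg (‖w y‖ - 2 * ‖v y‖)]
  rw [integral_const_mul] at hamgm
  linarith [norm_sq_add_norm_sq_le_integral_of_hasDerivAt hd ha hb hv hw]

end Trace

theorem stmt_14_general (u ux uy : ℝ × ℝ → ℂ) (Up Um : ℝ → ℂ)
    (hmu : Measurable u) (hmuy : Measurable uy)
    -- partial derivatives off the x-axis
    (hy : ∀ x : ℝ, ∀ y : ℝ, y ≠ 0 → HasDerivAt (fun t => u (x, t)) (uy (x, y)) y)
    -- one-sided traces on the x-axis
    (htp : ∀ x : ℝ, Tendsto (fun y => u (x, y)) (nhdsWithin 0 (Set.Ioi 0)) (nhds (Up x)))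
    (htm : ∀ x : ℝ, Tendsto (fun y => u (x, y)) (nhdsWithin 0 (Set.Iio 0)) (nhds (Um x)))
    -- u ∈ H¹(ℝ×(ℝ∖{0}))
    (hint : Integrable (fun p : ℝ × ℝ => ‖ux p‖ ^ 2 + ‖uy p‖ ^ 2))
    (hint2 : Integrable (fun p : ℝ × ℝ => ‖u p‖ ^ 2)) :
    (∫ p : ℝ × ℝ, (‖ux p‖ ^ 2 + ‖uy p‖ ^ 2)) - (∫ x : ℝ, ‖Up x - Um x‖ ^ 2)
      ≥ -4 * ∫ p : ℝ × ℝ, ‖u p‖ ^ 2 := by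
  have huy : Integrable (fun p : ℝ × ℝ => ‖uy p‖ ^ 2) :=
    hint.mono' (hmuy.norm.pow_const 2).aestronglyMeasurable
      (ae_of_all _ fun _ => by simp)
  have hbound : Integrable (fun p : ℝ × ℝ => ‖uy p‖ ^ 2 + 4 * ‖u p‖ ^ 2) :=
    huy.add (hint2.const_mul 4)
  have hslice : ∀ᵐ x, ‖Up x - Um x‖ ^ 2 ≤ ∫ y, (‖uy (x, y)‖ ^ 2 + 4 * ‖u (x, y)‖ ^ 2) := by
    filter_upwards [hint2.prod_right_ae, huy.prod_right_ae] with x hu hux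
    have hu_slice : MemLp (fun y => u (x, y)) 2 :=
      (memLp_two_iff_integrable_sq_norm (hmu.comp measurable_prodMk_left).aestronglyMeasurable).2 hu
    have huy_slice : MemLp (fun y => uy (x, y)) 2 :=
      (memLp_two_iff_integrable_sq_norm
        (hmuy.comp measurable_prodMk_left).aestronglyMeasurable).2 hux
    exact norm_sub_sq_le_integral_of_hasDerivAt (hy x) (htp x) (htm x) hu_slice huy_slice
  have hjump : ∫ x, ‖Up x - Um x‖ ^ 2 ≤ ∫ p : ℝ × ℝ, (‖uy p‖ ^ 2 + 4 * ‖u p‖ ^ 2) := by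
    rw [Measure.volume_eq_prod, integral_prod _ hbound]
    -- the jump term needs no integrability: it is nonnegative and dominated a.e.
    exact integral_mono_of_nonneg (ae_of_all _ fun _ => by positivity)
      hbound.integral_prod_left hslice
  have huy_le : ∫ p, ‖uy p‖ ^ 2 ≤ ∫ p : ℝ × ℝ, (‖ux p‖ ^ 2 + ‖uy p‖ ^ 2) :=
    integral_mono huy hint fun p => le_add_of_nonneg_left (sq_nonneg ‖ux p‖)
  rw [integral_add huy (hint2.const_mul 4), integral_const_mul] at hjump
  linarith

theorem stmt_14 (u ux uy : ℝ × ℝ → ℂ) (Up Um : ℝ → ℂ)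
    (hmu : Measurable u) (hmux : Measurable ux) (hmuy : Measurable uy)
    -- partial derivatives off the x-axis
    (hx : ∀ y : ℝ, y ≠ 0 → ∀ x : ℝ, HasDerivAt (fun s => u (s, y)) (ux (x, y)) x)
    (hy : ∀ x : ℝ, ∀ y : ℝ, y ≠ 0 → HasDerivAt (fun t => u (x, t)) (uy (x, y)) y)
    -- one-sided traces on the x-axis
    (htp : ∀ x : ℝ, Tendsto (fun y => u (x, y)) (nhdsWithin 0 (Set.Ioi 0)) (nhds (Up x)))
    (htm : ∀ x : ℝ, Tendsto (fun y => u (x, y)) (nhdsWithin 0 (Set.Iio 0)) (nhds (Um x)))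
    -- u ∈ H¹(ℝ×(ℝ∖{0}))
    (hint : Integrable (fun p : ℝ × ℝ => ‖ux p‖ ^ 2 + ‖uy p‖ ^ 2))
    (hint2 : Integrable (fun p : ℝ × ℝ => ‖u p‖ ^ 2)) :
    (∫ p : ℝ × ℝ, (‖ux p‖ ^ 2 + ‖uy p‖ ^ 2)) - (∫ x : ℝ, ‖Up x - Um x‖ ^ 2)
      ≥ -4 * ∫ p : ℝ × ℝ, ‖u p‖ ^ 2 :=
  stmt_14_general u ux uy Up Um hmu hmuy hy htp htm hint hint2
end
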